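/- Let A be a finite-dimensional Frobenius algebra over a field K which is a symmetric algebra (the form η(a ⊗ b) = λ_L(1_A)(a b) satisfies η(a ⊗ b) = η(b ⊗ a)). Then the left A^e-submodule D of A ⊗ A generated by T(δ(1_A)) is isomorphic as a left A^e-module to A (with A^e-action (a ⊗ b)·c = a c b), via the map δ : A → D; consequently, for any right A-module M and left A-module N, the cotensor product satisfies M □ N ≅ Hom_{A^e}(A, N ⊗ M) as K-vector spaces, i.e. M □ N is the degree-zero Hochschild cohomology H^0(A, N ⊗ M). -/

import Mathlib

open TensorProduct

variable {K : Type*} [Field K] {A : Type*} [Ring A] [Algebra K A]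

/-- `D`: the left `A^e`-submodule of `A ⊗ A` generated by `T(δ(1))`, where
`A^e = A ⊗ A^op` acts by `(a ⊗ b) · (u ⊗ v) = (a u) ⊗ (v b)` and `T` is the flip.
As a subspace, it is the `K`-span of the orbit of `T(δ(1))` under the action. -/
noncomputable def Dsub (δ : A →ₗ[K] A ⊗[K] A) : Submodule K (A ⊗[K] A) :=
  Submodule.span K
    {y : A ⊗[K] A | ∃ a b : A,
      y = (TensorProduct.map (LinearMap.mulLeft K a) (LinearMap.mulRight K b))
            ((TensorProduct.comm K A A) (δ 1))}

lemma Tdelta_mem_Dsub (δ : A →ₗ[K] A ⊗[K] A) :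
    (TensorProduct.comm K A A) (δ 1) ∈ Dsub δ := by
  apply Submodule.subset_span
  refine ⟨1, 1, ?_⟩
  simp [LinearMap.mulLeft_one, LinearMap.mulRight_one]

lemma Dsub_action_mem (δ : A →ₗ[K] A ⊗[K] A) (a b : A) {u : A ⊗[K] A}
    (hu : u ∈ Dsub δ) :
    (TensorProduct.map (LinearMap.mulLeft K a) (LinearMap.mulRight K b)) u ∈ Dsub δ := by
  induction hu using Submodule.span_induction with
  | mem y hy =>
      obtain ⟨c, d, rfl⟩ := hy
      apply Submodule.subset_span
      refine ⟨a * c, d * b, ?_⟩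
      rw [LinearMap.mulLeft_mul, LinearMap.mulRight_mul, TensorProduct.map_comp,
        LinearMap.comp_apply]
  | zero => simp only [map_zero]; exact (Dsub δ).zero_mem
  | add x y _ _ hx hy => rw [map_add]; exact (Dsub δ).add_mem hx hy
  | smul c x _ hx => rw [map_smul]; exact (Dsub δ).smul_mem c hx

/-- The operator `y ↦ a · y` on a left `A`-module `(N, n)`. -/
noncomputable def lAct {N : Type*} [AddCommGroup N] [Module K N]
    (n : A ⊗[K] N →ₗ[K] N) (a : A) : N →ₗ[K] N :=
  n ∘ₗ TensorProduct.mk K A N a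

/-- The operator `x ↦ x · b` on a right `A`-module `(M, m)`. -/
noncomputable def rAct {M : Type*} [AddCommGroup M] [Module K M]
    (m : M ⊗[K] A →ₗ[K] M) (b : A) : M →ₗ[K] M :=
  m ∘ₗ (TensorProduct.mk K M A).flip b

/-- The comodule structure map `∇_m` of a right `A`-module `(M, m)`. -/
noncomputable def nablaR (δ : A →ₗ[K] A ⊗[K] A)
    {M : Type*} [AddCommGroup M] [Module K M] (m : M ⊗[K] A →ₗ[K] M) :
    M →ₗ[K] M ⊗[K] A :=
  (TensorProduct.map m (LinearMap.id : A →ₗ[K] A)) ∘ₗ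
    (TensorProduct.assoc K M A A).symm.toLinearMap ∘ₗ
      (TensorProduct.map (LinearMap.id : M →ₗ[K] M) δ) ∘ₗ
        ((TensorProduct.mk K M A).flip 1)

/-- The comodule structure map `∇_n` of a left `A`-module `(N, n)`. -/
noncomputable def nablaL (δ : A →ₗ[K] A ⊗[K] A)
    {N : Type*} [AddCommGroup N] [Module K N] (n : A ⊗[K] N →ₗ[K] N) :
    N →ₗ[K] A ⊗[K] N :=
  (TensorProduct.map (LinearMap.id : A →ₗ[K] A) n) ∘ₗ
    (TensorProduct.assoc K A A N).toLinearMap ∘ₗ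
      (TensorProduct.map δ (LinearMap.id : N →ₗ[K] N)) ∘ₗ
        (TensorProduct.mk K A N 1)

/-- The map `φ = (∇_m ⊗ id_N) − (id_M ⊗ ∇_n) : M ⊗ N → M ⊗ A ⊗ N` whose kernel is
the cotensor product `M □ N`. -/
noncomputable def cophi (δ : A →ₗ[K] A ⊗[K] A)
    {M : Type*} [AddCommGroup M] [Module K M] (m : M ⊗[K] A →ₗ[K] M)
    {N : Type*} [AddCommGroup N] [Module K N] (n : A ⊗[K] N →ₗ[K] N) :
    M ⊗[K] N →ₗ[K] M ⊗[K] (A ⊗[K] N) :=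
  ((TensorProduct.assoc K M A N).toLinearMap ∘ₗ
      TensorProduct.map (nablaR δ m) (LinearMap.id : N →ₗ[K] N)) -
    TensorProduct.map (LinearMap.id : M →ₗ[K] M) (nablaL δ n)

/-- The space `Hom_{A^e}(A, N ⊗ M)` of left `A^e`-module homomorphisms from `A`
(with action `(a ⊗ b) · c = a c b`) to `N ⊗ M` (with action
`(a ⊗ b) · (y ⊗ x) = (a · y) ⊗ (x · b)`); this is `H^0(A, N ⊗ M)`, the degree-zero
Hochschild cohomology of `N ⊗ M`. -/
noncomputable def HomAeA
    {M : Type*} [AddCommGroup M] [Module K M] (m : M ⊗[K] A →ₗ[K] M)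
    {N : Type*} [AddCommGroup N] [Module K N] (n : A ⊗[K] N →ₗ[K] N) :
    Submodule K (A →ₗ[K] N ⊗[K] M) where
  carrier := {f | ∀ (a b c : A),
    f (a * c * b) = (TensorProduct.map (lAct n a) (rAct m b)) (f c)}
  add_mem' := by
    intro f g hf hg a b c
    simp only [LinearMap.add_apply, hf a b c, hg a b c, map_add]
  zero_mem' := by
    intro a b c
    simp only [LinearMap.zero_apply, map_zero]
  smul_mem' := by
    intro k f hf a b c
    simp only [LinearMap.smul_apply, hf a b c, map_smul]

/- ===== auxiliary lemmas ===== -/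

/-- Contraction map: `Jmap lL W (u ⊗ w) a = lL a u • w`. -/
noncomputable def Jmap (lL : A ≃ₗ[K] Module.Dual K A)
    (W : Type*) [AddCommGroup W] [Module K W] :
    A ⊗[K] W →ₗ[K] (A →ₗ[K] W) :=
  dualTensorHom K A W ∘ₗ LinearMap.rTensor W lL.toLinearMap.flip

lemma Jmap_tmul (lL : A ≃ₗ[K] Module.Dual K A)
    {W : Type*} [AddCommGroup W] [Module K W] (u : A) (w : W) (a : A) :
    Jmap lL W (u ⊗ₜ[K] w) a = lL a u • w := by
  simp [Jmap, dualTensorHom_apply, LinearMap.rTensor_tmul]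

lemma Jmap_injective [FiniteDimensional K A] (lL : A ≃ₗ[K] Module.Dual K A)
    {W : Type*} [AddCommGroup W] [Module K W] :
    Function.Injective (Jmap lL W) := by
  have he : Function.Injective (lL.toLinearMap.flip) := by
    intro u v h
    have h0 : ∀ φ : Module.Dual K A, φ (u - v) = 0 := by
      intro φ
      obtain ⟨a, rfl⟩ := lL.surjective φ
      have := congrArg (fun f : Module.Dual K A => f a) h
      simpa [LinearMap.flip_apply, sub_eq_zero] using this
    have := (Module.forall_dual_apply_eq_zero_iff K (u - v)).mp h0
    exact sub_eq_zero.mp this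
  have h1 : Function.Injective (LinearMap.rTensor W lL.toLinearMap.flip) :=
    Module.Flat.rTensor_preserves_injective_linearMap _ he
  have h2 : Function.Injective (dualTensorHom K A W) := by
    rw [← dualTensorHomEquivOfBasis_toLinearMap (b := Module.finBasis K A)]
    exact (dualTensorHomEquivOfBasis (Module.finBasis K A)).injective
  intro x y hxy
  exact h1 (h2 hxy)

lemma Jmap_comm_eval (lL : A ≃ₗ[K] Module.Dual K A) (ε : A →ₗ[K] K)
    (hε : ∀ u a : A, lL a u = ε (u * a)) (w : A ⊗[K] A) (a : A) :
    Jmap lL A ((TensorProduct.comm K A A) w) a =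
      (TensorProduct.rid K A) ((TensorProduct.map (LinearMap.id : A →ₗ[K] A) ε)
        ((TensorProduct.map (LinearMap.id : A →ₗ[K] A) (LinearMap.mulRight K a)) w)) := by
  induction w using TensorProduct.induction_on with
  | zero => simp
  | tmul u v => simp [Jmap_tmul, hε, TensorProduct.smul_tmul']
  | add w1 w2 h1 h2 => simp only [map_add, LinearMap.add_apply, h1, h2]

lemma Jmap_eval (lL : A ≃ₗ[K] Module.Dual K A) (ε : A →ₗ[K] K)
    (hε : ∀ u a : A, lL a u = ε (a * u)) (w : A ⊗[K] A) (a : A) :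
    Jmap lL A w a =
      (TensorProduct.lid K A) ((TensorProduct.map ε (LinearMap.id : A →ₗ[K] A))
        ((TensorProduct.map (LinearMap.mulLeft K a) (LinearMap.id : A →ₗ[K] A)) w)) := by
  induction w using TensorProduct.induction_on with
  | zero => simp
  | tmul u v => simp [Jmap_tmul, hε]
  | add w1 w2 h1 h2 => simp only [map_add, LinearMap.add_apply, h1, h2]

lemma comm_map_apply {M N P Q : Type*} [AddCommGroup M] [Module K M] [AddCommGroup N]
    [Module K N] [AddCommGroup P] [Module K P] [AddCommGroup Q] [Module K Q]
    (f : M →ₗ[K] P) (g : N →ₗ[K] Q) (w : M ⊗[K] N) :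
    (TensorProduct.comm K P Q) (TensorProduct.map f g w) =
      TensorProduct.map g f ((TensorProduct.comm K M N) w) := by
  induction w using TensorProduct.induction_on with
  | zero => simp
  | tmul u v => simp
  | add w1 w2 h1 h2 => simp only [map_add, h1, h2]

lemma map_split {M N P Q : Type*} [AddCommGroup M] [Module K M] [AddCommGroup N]
    [Module K N] [AddCommGroup P] [Module K P] [AddCommGroup Q] [Module K Q]
    (f : M →ₗ[K] P) (g : N →ₗ[K] Q) (w : M ⊗[K] N) :
    TensorProduct.map f g w =
      TensorProduct.map f LinearMap.id (TensorProduct.map LinearMap.id g w) := by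
  induction w using TensorProduct.induction_on with
  | zero => simp
  | tmul u v => simp
  | add w1 w2 h1 h2 => simp only [map_add, h1, h2]

lemma map_swap {M N P Q : Type*} [AddCommGroup M] [Module K M] [AddCommGroup N]
    [Module K N] [AddCommGroup P] [Module K P] [AddCommGroup Q] [Module K Q]
    (f : M →ₗ[K] P) (g : N →ₗ[K] Q) (w : M ⊗[K] N) :
    TensorProduct.map f LinearMap.id (TensorProduct.map LinearMap.id g w) =
      TensorProduct.map LinearMap.id g (TensorProduct.map f LinearMap.id w) := by
  induction w using TensorProduct.induction_on with
  | zero => simp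
  | tmul u v => simp
  | add w1 w2 h1 h2 => simp only [map_add, h1, h2]

lemma subA (lL : A ≃ₗ[K] Module.Dual K A)
    {M N : Type*} [AddCommGroup M] [Module K M] [AddCommGroup N] [Module K N]
    (m : M ⊗[K] A →ₗ[K] M) (w : A ⊗[K] A) (x : M) (y : N) (a : A) :
    Jmap lL (M ⊗[K] N) ((TensorProduct.leftComm K M A N)
        ((TensorProduct.assoc K M A N)
          (((TensorProduct.map m (LinearMap.id : A →ₗ[K] A))
            ((TensorProduct.assoc K M A A).symm (x ⊗ₜ[K] w))) ⊗ₜ[K] y))) a =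
      (m (x ⊗ₜ[K] (Jmap lL A ((TensorProduct.comm K A A) w) a))) ⊗ₜ[K] y := by
  induction w using TensorProduct.induction_on with
  | zero => simp
  | tmul u v =>
      simp [Jmap_tmul, ← TensorProduct.smul_tmul', TensorProduct.tmul_smul, map_smul]
  | add w1 w2 h1 h2 =>
      simp only [TensorProduct.tmul_add, map_add, TensorProduct.add_tmul,
        LinearMap.add_apply, h1, h2]

lemma subB (lL : A ≃ₗ[K] Module.Dual K A)
    {M N : Type*} [AddCommGroup M] [Module K M] [AddCommGroup N] [Module K N]
    (n : A ⊗[K] N →ₗ[K] N) (w : A ⊗[K] A) (x : M) (y : N) (a : A) :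
    Jmap lL (M ⊗[K] N) ((TensorProduct.leftComm K M A N)
        (x ⊗ₜ[K] ((TensorProduct.map (LinearMap.id : A →ₗ[K] A) n)
          ((TensorProduct.assoc K A A N) (w ⊗ₜ[K] y))))) a =
      x ⊗ₜ[K] (n ((Jmap lL A w a) ⊗ₜ[K] y)) := by
  induction w using TensorProduct.induction_on with
  | zero => simp
  | tmul u v =>
      simp [Jmap_tmul, ← TensorProduct.smul_tmul', TensorProduct.tmul_smul, map_smul]
  | add w1 w2 h1 h2 =>
      simp only [TensorProduct.add_tmul, map_add, TensorProduct.tmul_add,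
        LinearMap.add_apply, h1, h2]

/-- If the Frobenius algebra `A` is a symmetric algebra, then the
left `A^e`-submodule `D` generated by `T(δ(1))` is isomorphic to `A` as a left
`A^e`-module via `δ`, and consequently for any right `A`-module `M` and left
`A`-module `N` the cotensor product satisfies
`M □ N ≅ Hom_{A^e}(A, N ⊗ M) = H^0(A, N ⊗ M)` as `K`-vector spaces. -/
theorem symmetric_cotensor_is_hochschild
    [FiniteDimensional K A]
    (lL : A ≃ₗ[K] Module.Dual K A)
    (hlL : ∀ a x b : A, lL (a * x) b = lL x (b * a))
    (δ : A →ₗ[K] A ⊗[K] A) (ε : A →ₗ[K] K)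
    (hcoassoc : ∀ a : A,
      (TensorProduct.assoc K A A A)
          ((TensorProduct.map δ (LinearMap.id : A →ₗ[K] A)) (δ a)) =
        (TensorProduct.map (LinearMap.id : A →ₗ[K] A) δ) (δ a))
    (hcounit_l : ∀ a : A,
      (TensorProduct.lid K A)
          ((TensorProduct.map ε (LinearMap.id : A →ₗ[K] A)) (δ a)) = a)
    (hcounit_r : ∀ a : A,
      (TensorProduct.rid K A)
          ((TensorProduct.map (LinearMap.id : A →ₗ[K] A) ε) (δ a)) = a)
    (hbimod : ∀ a x b : A,
      δ (a * x * b) =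
        (TensorProduct.map (LinearMap.mulLeft K a) (LinearMap.mulRight K b)) (δ x))
    (hεlL : ∀ a : A, ε a = lL 1 a)
    (hsymm : ∀ a b : A, lL 1 (a * b) = lL 1 (b * a))
    {M : Type*} [AddCommGroup M] [Module K M] (m : M ⊗[K] A →ₗ[K] M)
    (hm_assoc : ∀ (x : M) (a b : A), m (m (x ⊗ₜ[K] a) ⊗ₜ[K] b) = m (x ⊗ₜ[K] (a * b)))
    (hm_one : ∀ x : M, m (x ⊗ₜ[K] (1 : A)) = x)
    {N : Type*} [AddCommGroup N] [Module K N] (n : A ⊗[K] N →ₗ[K] N)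
    (hn_assoc : ∀ (a b : A) (y : N), n (a ⊗ₜ[K] n (b ⊗ₜ[K] y)) = n ((a * b) ⊗ₜ[K] y))
    (hn_one : ∀ y : N, n ((1 : A) ⊗ₜ[K] y) = y) :
    (∃ ψ : A ≃ₗ[K] Dsub δ,
      (∀ x : A, (ψ x : A ⊗[K] A) = δ x) ∧
      (∀ a b x : A,
        (ψ (a * x * b) : A ⊗[K] A) =
          (TensorProduct.map (LinearMap.mulLeft K a) (LinearMap.mulRight K b))
            (ψ x : A ⊗[K] A))) ∧
    Nonempty (HomAeA m n ≃ₗ[K] LinearMap.ker (cophi δ m n)) := by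

  -- derived forms of the Frobenius pairing
  have hεa : ∀ u a : A, lL a u = ε (u * a) := by
    intro u a
    have h1 := hlL a 1 u
    rw [mul_one] at h1
    rw [h1, hεlL]
  have hεa' : ∀ u a : A, lL a u = ε (a * u) := by
    intro u a
    rw [hεa u a, hεlL, hsymm, ← hεlL]
  have hJ1 : ∀ a : A, Jmap lL A (δ 1) a = a := by
    intro a
    rw [Jmap_eval lL ε hεa']
    have hδa : TensorProduct.map (LinearMap.mulLeft K a) (LinearMap.id : A →ₗ[K] A) (δ 1)
        = δ a := by
      have h := hbimod a 1 1
      rw [mul_one, mul_one, LinearMap.mulRight_one] at h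
      exact h.symm
    rw [hδa]
    exact hcounit_l a
  have hJ2 : ∀ a : A, Jmap lL A ((TensorProduct.comm K A A) (δ 1)) a = a := by
    intro a
    rw [Jmap_comm_eval lL ε hεa]
    have hδa : TensorProduct.map (LinearMap.id : A →ₗ[K] A) (LinearMap.mulRight K a) (δ 1)
        = δ a := by
      have h := hbimod 1 1 a
      rw [one_mul, one_mul, LinearMap.mulLeft_one] at h
      exact h.symm
    rw [hδa]
    exact hcounit_r a
  have hT : (TensorProduct.comm K A A) (δ 1) = δ 1 :=
    Jmap_injective lL (LinearMap.ext fun a => (hJ2 a).trans (hJ1 a).symm)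
  have hδinj : Function.Injective δ := by
    intro x y hxy
    have hx := hcounit_r x
    have hy := hcounit_r y
    rw [hxy] at hx
    exact hx.symm.trans hy
  have hD : Dsub δ = LinearMap.range δ := by
    apply le_antisymm
    · rw [Dsub]
      apply Submodule.span_le.mpr
      rintro _ ⟨a, b, rfl⟩
      rw [hT]
      exact ⟨a * 1 * b, hbimod a 1 b⟩
    · rintro _ ⟨x, rfl⟩
      apply Submodule.subset_span
      refine ⟨x, 1, ?_⟩
      rw [hT]
      have h := hbimod x 1 1
      rw [mul_one, mul_one] at h
      exact h
  constructor
  · -- the isomorphism ψ : A ≃ D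
    refine ⟨(LinearEquiv.ofInjective δ hδinj).trans (LinearEquiv.ofEq _ _ hD.symm), ?_, ?_⟩
    · intro x
      simp [LinearEquiv.trans_apply]
    · intro a b x
      simp only [LinearEquiv.trans_apply, LinearEquiv.coe_ofEq_apply,
        LinearEquiv.ofInjective_apply]
      exact hbimod a x b
  · -- the cotensor product as Hochschild cohomology
    have hXi : ∀ (z : M ⊗[K] N) (a : A),
        Jmap lL (M ⊗[K] N) ((TensorProduct.leftComm K M A N) (cophi δ m n z)) a =
          TensorProduct.map (rAct m a) (LinearMap.id : N →ₗ[K] N) z -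
            TensorProduct.map (LinearMap.id : M →ₗ[K] M) (lAct n a) z := by
      intro z a
      induction z using TensorProduct.induction_on with
      | zero => simp
      | tmul x y =>
          have e1 := subA lL m (δ 1) x y a
          have e2 := subB lL n (δ 1) x y a
          rw [hJ2 a] at e1
          rw [hJ1 a] at e2
          simp only [cophi, nablaR, nablaL, LinearMap.sub_apply, LinearMap.coe_comp,
            Function.comp_apply, LinearEquiv.coe_coe, TensorProduct.map_tmul,
            LinearMap.id_coe, id_eq, LinearMap.flip_apply, TensorProduct.mk_apply,
            map_sub]
          rw [e1, e2]
          simp [rAct, lAct]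
      | add z1 z2 h1 h2 =>
          simp only [map_add, LinearMap.add_apply, h1, h2]
          abel
    have hΞinj : Function.Injective
        ((Jmap lL (M ⊗[K] N)) ∘ₗ (TensorProduct.leftComm K M A N).toLinearMap) := by
      intro u v huv
      exact (TensorProduct.leftComm K M A N).injective (Jmap_injective lL huv)
    have hker : ∀ z : M ⊗[K] N, cophi δ m n z = 0 ↔
        ∀ a : A, TensorProduct.map (rAct m a) (LinearMap.id : N →ₗ[K] N) z
          = TensorProduct.map (LinearMap.id : M →ₗ[K] M) (lAct n a) z := by
      intro z
      constructor
      · intro h a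
        have h0 := hXi z a
        rw [h] at h0
        simp only [map_zero, LinearMap.zero_apply] at h0
        exact sub_eq_zero.mp h0.symm
      · intro h
        apply hΞinj
        rw [map_zero]
        apply LinearMap.ext
        intro a
        rw [LinearMap.zero_apply]
        show Jmap lL (M ⊗[K] N) ((TensorProduct.leftComm K M A N) (cophi δ m n z)) a = 0
        rw [hXi z a, h a, sub_self]
    have hlAct1 : lAct n 1 = LinearMap.id := LinearMap.ext fun y => by
      simpa [lAct] using hn_one y
    have hrAct1 : rAct m 1 = LinearMap.id := LinearMap.ext fun x => by
      simpa [rAct] using hm_one x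
    have hlmul : ∀ (p q : A) (v : N ⊗[K] M),
        TensorProduct.map (lAct n (p * q)) (LinearMap.id : M →ₗ[K] M) v =
          TensorProduct.map (lAct n p) LinearMap.id
            (TensorProduct.map (lAct n q) LinearMap.id v) := by
      intro p q v
      induction v using TensorProduct.induction_on with
      | zero => simp
      | tmul yy xx => simp [lAct, hn_assoc]
      | add v1 v2 h1 h2 => simp only [map_add, h1, h2]
    set F : (N ⊗[K] M) →ₗ[K] (A →ₗ[K] N ⊗[K] M) :=
      ((LinearMap.rTensorHom M : (N →ₗ[K] N) →ₗ[K] (N ⊗[K] M →ₗ[K] N ⊗[K] M)) ∘ₗ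
        ((LinearMap.llcomp K N (A ⊗[K] N) N n) ∘ₗ (TensorProduct.mk K A N))).flip with hFdef
    have hF : ∀ (w : N ⊗[K] M) (c : A),
        F w c = TensorProduct.map (lAct n c) (LinearMap.id : M →ₗ[K] M) w :=
      fun w c => rfl
    have hmemΦ : ∀ f : HomAeA m n,
        (TensorProduct.comm K N M) (f.1 1) ∈ LinearMap.ker (cophi δ m n) := by
      intro f
      rw [LinearMap.mem_ker, hker]
      intro a
      have h1 := f.2 a 1 1
      rw [mul_one, mul_one, hrAct1] at h1
      have h2 := f.2 1 a 1
      rw [one_mul, one_mul, hlAct1] at h2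
      have h3 := h1.symm.trans h2
      have h4 := congrArg (TensorProduct.comm K N M) h3
      rw [comm_map_apply, comm_map_apply] at h4
      exact h4.symm
    have hmemΨ : ∀ z : LinearMap.ker (cophi δ m n),
        (F ((TensorProduct.comm K N M).symm z.1)) ∈ HomAeA m n := by
      intro z
      have hz : ∀ p : A, TensorProduct.map (rAct m p) (LinearMap.id : N →ₗ[K] N) z.1
          = TensorProduct.map (LinearMap.id : M →ₗ[K] M) (lAct n p) z.1 :=
        (hker z.1).mp (LinearMap.mem_ker.mp z.2)
      have hinv : ∀ p : A,
          TensorProduct.map (lAct n p) (LinearMap.id : M →ₗ[K] M)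
              ((TensorProduct.comm K N M).symm z.1)
            = TensorProduct.map (LinearMap.id : N →ₗ[K] N) (rAct m p)
              ((TensorProduct.comm K N M).symm z.1) := by
        intro p
        apply (TensorProduct.comm K N M).injective
        rw [comm_map_apply, comm_map_apply, LinearEquiv.apply_symm_apply]
        exact (hz p).symm
      show ∀ a b c : A,
        (F ((TensorProduct.comm K N M).symm z.1)) (a * c * b) =
          (TensorProduct.map (lAct n a) (rAct m b))
            ((F ((TensorProduct.comm K N M).symm z.1)) c)
      intro a b c
      rw [hF, hF, hlmul (a * c) b, hlmul a c, hinv b, map_swap, ← map_split]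
    refine ⟨LinearEquiv.ofLinear
      (LinearMap.codRestrict (LinearMap.ker (cophi δ m n))
        ((TensorProduct.comm K N M).toLinearMap ∘ₗ
          (LinearMap.applyₗ (1 : A)) ∘ₗ (HomAeA m n).subtype)
        (fun f => hmemΦ f))
      (LinearMap.codRestrict (HomAeA m n)
        (F ∘ₗ (TensorProduct.comm K N M).symm.toLinearMap ∘ₗ
          (LinearMap.ker (cophi δ m n)).subtype)
        (fun z => hmemΨ z)) ?_ ?_⟩
    · apply LinearMap.ext
      intro z
      apply Subtype.ext
      simp only [LinearMap.coe_comp, Function.comp_apply, LinearMap.codRestrict_apply,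
        Submodule.coe_subtype, LinearEquiv.coe_coe, LinearMap.applyₗ_apply_apply,
        LinearMap.id_coe, id_eq]
      show (TensorProduct.comm K N M) (F ((TensorProduct.comm K N M).symm z.1) 1) = z.1
      rw [hF, hlAct1, TensorProduct.map_id, LinearMap.id_apply,
        LinearEquiv.apply_symm_apply]
    · apply LinearMap.ext
      intro f
      apply Subtype.ext
      apply LinearMap.ext
      intro c
      simp only [LinearMap.coe_comp, Function.comp_apply, LinearMap.codRestrict_apply,
        Submodule.coe_subtype, LinearEquiv.coe_coe, LinearMap.applyₗ_apply_apply,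
        LinearMap.id_coe, id_eq]
      show F ((TensorProduct.comm K N M).symm ((TensorProduct.comm K N M) (f.1 1))) c = f.1 c
      rw [LinearEquiv.symm_apply_apply, hF]
      have h1 := f.2 c 1 1
      rw [mul_one, mul_one, hrAct1] at h1
      exact h1.symm
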